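/- arXiv:1505.00566 — 9 statements merged into one kernel-verified Lean document; each statement's English description precedes it below -/
import Mathlib

section
/- Let f(t) = exp(-λ/t) for λ > 0. If 0 < x < y and λ/(x+y) > 2, then f(x) + f(y) ≤ f(x+y). -/
/-! Put `a = λ/(x+y)`, `u = λ/x - a` and `v = λ/y - a`. Then `f x + f y = e^{-a} (e^{-u} + e^{-v})`,
and since `1/x + 1/y = (x+y)/(xy)` one finds `u v = a² ≥ 1`. Finally `e^{-u} ≤ 1/(1+u)`, and
`1/(1+u) + 1/(1+v) ≤ 1` is equivalent to `1 ≤ u v`. -/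

open Real

theorem exp_neg_add_exp_neg_le_one {u v : ℝ} (hu : 0 ≤ u) (hv : 0 ≤ v) (huv : 1 ≤ u * v) :
    exp (-u) + exp (-v) ≤ 1 := by
  have exp_neg_le (t : ℝ) (ht : 0 ≤ t) : exp (-t) ≤ (1 + t)⁻¹ := by
    rw [exp_neg]
    exact inv_anti₀ (by positivity) (by linarith [add_one_le_exp t])
  have harmonic : (1 + u)⁻¹ + (1 + v)⁻¹ ≤ 1 := by
    rw [inv_add_inv (by positivity) (by positivity), div_le_one (by positivity)]
    linarith
  linarith [exp_neg_le u hu, exp_neg_le v hv]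

theorem div_sub_div_add_mul_div_sub_div_add (lam : ℝ) {x y : ℝ} (hx : x ≠ 0) (hy : y ≠ 0)
    (hxy : x + y ≠ 0) :
    (lam / x - lam / (x + y)) * (lam / y - lam / (x + y)) = (lam / (x + y)) ^ 2 := by
  field_simp
  ring

/-- Let `f(t) = exp(-λ/t)` for `λ > 0`. If `0 < x < y` and `λ/(x+y) > 2`, then
`f(x) + f(y) ≤ f(x+y)`. -/
theorem stmt0 (lam x y : ℝ) (hlam : 0 < lam) (hx : 0 < x) (hxy : x < y)
    (h : lam / (x + y) > 2) :
    Real.exp (-lam / x) + Real.exp (-lam / y) ≤ Real.exp (-lam / (x + y)) := by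
  have hy : 0 < y := hx.trans hxy
  have hs : 0 < x + y := by linarith
  set a := lam / (x + y)
  have hu : 0 ≤ lam / x - a := sub_nonneg.2 (div_le_div_of_nonneg_left hlam.le hx (by linarith))
  have hv : 0 ≤ lam / y - a := sub_nonneg.2 (div_le_div_of_nonneg_left hlam.le hy (by linarith))
  have huv : 1 ≤ (lam / x - a) * (lam / y - a) := by
    rw [div_sub_div_add_mul_div_sub_div_add lam hx.ne' hy.ne' hs.ne']
    nlinarith
  have split (t : ℝ) : exp (-lam / t) = exp (-a) * exp (-(lam / t - a)) := by
    rw [← exp_add]; ring_nf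
  calc exp (-lam / x) + exp (-lam / y)
      = exp (-a) * (exp (-(lam / x - a)) + exp (-(lam / y - a))) := by
        rw [split x, split y, mul_add]
    _ ≤ exp (-a) * 1 := by
        gcongr
        exact exp_neg_add_exp_neg_le_one hu hv huv
    _ = exp (-lam / (x + y)) := by rw [mul_one, neg_div]
end

section
/- Let α = (α₁,…,α_m) be a normalized score vector (α₁ ≥ α₂ ≥ … ≥ α_m = 0, α₁ > 0). In an α-scoring rule election E with unique winner w and second-highest scorer z, we have α₁·(M(E) − 1) ≤ s(w) − s(z) ≤ 2·α₁·M(E), where M(E) is the margin of victory and s(x) denotes the total score of candidate x. -/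
open Finset

/-- A vote over `m` candidates is a linear order, represented as the bijection sending each
candidate to its position (position `0` is the top). -/
abbrev Vote (m : ℕ) := Fin m ≃ Fin m

/-- The number of votes in which the two profiles differ. -/
def diffCount {n m : ℕ} (p q : Fin n → Vote m) : ℕ :=
  (univ.filter fun i => p i ≠ q i).card

/-- The score of candidate `x` under score vector `α`: it receives `α j` from each vote
placing it at position `j`. -/
def score {n m : ℕ} (α : Fin m → ℝ) (p : Fin n → Vote m) (x : Fin m) : ℝ :=
  ∑ i, α (p i x)

/-- The set of winners: candidates with maximum score. -/
def winners {n m : ℕ} (α : Fin m → ℝ) (p : Fin n → Vote m) : Set (Fin m) :=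
  {x | ∀ y, score α p y ≤ score α p x}

/-- The margin of victory: the minimum number of votes that must be changed to change
the winner set. -/
noncomputable def MoV {n m : ℕ} (W : (Fin n → Vote m) → Set (Fin m))
    (p : Fin n → Vote m) : ℕ :=
  sInf {d | ∃ q : Fin n → Vote m, diffCount p q = d ∧ W q ≠ W p}

lemma greedy_aux {ι : Type*} [DecidableEq ι] (a : ℝ) (ha : 0 < a) (f : ι → ℝ) :
    ∀ (T : Finset ι) (D : ℝ), 0 < D → D ≤ ∑ i ∈ T, f i →
    ∃ S, S ⊆ T ∧ ((S.card : ℝ) - 1) * a ≤ D ∧ D ≤ ∑ i ∈ S, (f i + a) := by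
  intro T
  induction T using Finset.strongInduction with
  | _ T ih =>
    intro D hD hDle
    have hTne : T.Nonempty := by
      rcases T.eq_empty_or_nonempty with h | h
      · subst h; simp at hDle; linarith
      · exact h
    obtain ⟨b, hbT, hb⟩ := Finset.exists_max_image T f hTne
    have hfb : 0 < f b := by
      have h1 : ∑ i ∈ T, f i ≤ T.card • f b :=
        Finset.sum_le_card_nsmul T f (f b) (fun i hi => hb i hi)
      rw [nsmul_eq_mul] at h1
      by_contra h
      push_neg at h
      have : (T.card : ℝ) * f b ≤ 0 :=
        mul_nonpos_of_nonneg_of_nonpos (by positivity) h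
      linarith
    by_cases hcase : D ≤ f b + a
    · refine ⟨{b}, by simpa using hbT, ?_, by simpa using hcase⟩
      simp only [Finset.card_singleton, Nat.cast_one, sub_self, zero_mul]
      linarith
    · push_neg at hcase
      have hD' : 0 < D - (f b + a) := by linarith
      have hsub : T.erase b ⊂ T := Finset.erase_ssubset hbT
      have hle' : D - (f b + a) ≤ ∑ i ∈ T.erase b, f i := by
        rw [Finset.sum_erase_eq_sub hbT]; linarith
      obtain ⟨S', hS'sub, hS'1, hS'2⟩ := ih _ hsub _ hD' hle'
      have hbS' : b ∉ S' := fun h => (Finset.mem_erase.mp (hS'sub h)).1 rfl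
      refine ⟨insert b S', ?_, ?_, ?_⟩
      · intro x hx
        rcases Finset.mem_insert.mp hx with rfl | hx
        · exact hbT
        · exact Finset.mem_of_mem_erase (hS'sub hx)
      · rw [Finset.card_insert_of_notMem hbS']
        push_cast
        nlinarith
      · rw [Finset.sum_insert hbS']
        linarith

/-- For a normalized score vector `α` (`α₁ ≥ … ≥ α_m = 0`, `α₁ > 0`), if `w` is the unique
winner and `z` the second-highest scorer, then
`α₁ (M(E) - 1) ≤ s(w) - s(z) ≤ 2 α₁ M(E)`. -/
theorem stmt3 (n m : ℕ) (hm : 2 ≤ m) (hn : 1 ≤ n) (α : Fin m → ℝ)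
    (hα : ∀ i j : Fin m, i ≤ j → α j ≤ α i)
    (hlast : α ⟨m - 1, by omega⟩ = 0) (hpos : 0 < α ⟨0, by omega⟩)
    (p : Fin n → Vote m) (w z : Fin m)
    (hw : ∀ y, y ≠ w → score α p y < score α p w)
    (hz : z ≠ w) (hz2 : ∀ y, y ≠ w → score α p y ≤ score α p z) :
    α ⟨0, by omega⟩ * ((MoV (winners α) p : ℝ) - 1) ≤ score α p w - score α p z ∧
    score α p w - score α p z ≤ 2 * α ⟨0, by omega⟩ * (MoV (winners α) p : ℝ) := by
  classical
  have h0 : 0 < m := by omega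
  have h1 : m - 1 < m := by omega
  set a : ℝ := α ⟨0, h0⟩ with ha_def
  have hapos : 0 < a := hpos
  have hα0 : ∀ j : Fin m, 0 ≤ α j := by
    intro j
    have := hα j ⟨m - 1, h1⟩ (by rw [Fin.le_def]; simp; omega)
    rw [hlast] at this; exact this
  have hα1 : ∀ j : Fin m, α j ≤ a := by
    intro j
    exact hα ⟨0, h0⟩ j (by rw [Fin.le_def]; simp)
  set D : ℝ := score α p w - score α p z with hDdef
  have hDpos : 0 < D := by
    have := hw z hz; simp only [hDdef]; linarith
  -- winners of p is {w}
  have hwin : winners α p = {w} := by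
    ext x
    simp only [winners, Set.mem_setOf_eq, Set.mem_singleton_iff]
    constructor
    · intro h
      by_contra hx
      exact absurd (h w) (not_le.mpr (hw x hx))
    · intro hx
      intro y
      rw [hx]
      by_cases hy : y = w
      · subst hy; exact le_refl _
      · exact (hw y hy).le
  -- score perturbation bound
  have key : ∀ (u v : Fin n → Vote m) (x : Fin m),
      score α u x - score α v x ≤ a * ((univ.filter fun i => u i ≠ v i).card : ℝ) := by
    intro u v x
    rw [score, score, ← Finset.sum_sub_distrib]
    calc ∑ i, (α (u i x) - α (v i x))
        ≤ ∑ i, (if u i ≠ v i then a else 0) := by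
          apply Finset.sum_le_sum
          intro i _
          by_cases h : u i = v i
          · simp [h]
          · simp only [h, ne_eq, not_false_eq_true, if_true]
            linarith [hα0 (v i x), hα1 (u i x)]
      _ = a * ((univ.filter fun i => u i ≠ v i).card : ℝ) := by
          rw [Finset.sum_ite, Finset.sum_const, Finset.sum_const_zero, add_zero,
            nsmul_eq_mul, mul_comm]
  have keyswap : ∀ (q : Fin n → Vote m) (x : Fin m),
      score α q x - score α p x ≤ a * (diffCount p q : ℝ) := by
    intro q x
    have h := key q p x
    have hfe : (univ.filter fun i => q i ≠ p i) = (univ.filter fun i => p i ≠ q i) := by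
      apply Finset.filter_congr; intro i _; simp [ne_comm]
    rw [hfe] at h
    exact h
  -- the flip permutation: z on top, w at bottom
  set τ1 : Fin m ≃ Fin m := Equiv.swap z ⟨0, h0⟩ with hτ1
  set σ : Fin m ≃ Fin m := τ1.trans (Equiv.swap (τ1 w) ⟨m - 1, h1⟩) with hσ
  have hτ1z : τ1 z = ⟨0, h0⟩ := Equiv.swap_apply_left _ _
  have hτ1w0 : τ1 w ≠ ⟨0, h0⟩ := by
    rw [← hτ1z]
    intro h
    exact hz (τ1.injective h).symm
  have hne01 : (⟨0, h0⟩ : Fin m) ≠ ⟨m - 1, h1⟩ := by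
    simp only [ne_eq, Fin.mk.injEq]; omega
  have hσz : σ z = ⟨0, h0⟩ := by
    simp only [hσ, Equiv.trans_apply, hτ1z]
    exact Equiv.swap_apply_of_ne_of_ne (Ne.symm hτ1w0) hne01
  have hσw : σ w = ⟨m - 1, h1⟩ := by
    simp only [hσ, Equiv.trans_apply]
    exact Equiv.swap_apply_left _ _
  -- greedy selection
  set f : Fin n → ℝ := fun i => α (p i w) - α (p i z) with hf
  have hDsum : D = ∑ i, f i := by
    simp only [hDdef, score, hf, Finset.sum_sub_distrib]
  obtain ⟨S, -, hS1, hS2⟩ := greedy_aux a hapos f univ D hDpos (le_of_eq hDsum)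
  set q : Fin n → Vote m := fun i => if i ∈ S then σ else p i with hq
  have hq_in : ∀ i ∈ S, q i = σ := fun i hi => if_pos hi
  have hq_out : ∀ i, i ∉ S → q i = p i := fun i hi => if_neg hi
  -- score of q
  have hscore_split : ∀ x : Fin m, score α q x
      = ∑ i ∈ S, α (σ x) + ∑ i ∈ Sᶜ, α (p i x) := by
    intro x
    rw [score, ← Finset.sum_add_sum_compl S (fun i => α (q i x))]
    congr 1
    · exact Finset.sum_congr rfl fun i hi => by rw [hq_in i hi]
    · exact Finset.sum_congr rfl fun i hi => by
        rw [hq_out i (Finset.mem_compl.mp hi)]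
  have hqwz : score α q w ≤ score α q z := by
    rw [hscore_split w, hscore_split z, hσw, hσz, hlast]
    simp only [Finset.sum_const, smul_zero, zero_add, nsmul_eq_mul]
    -- need: ∑ i ∈ Sᶜ, α (p i w) ≤ S.card * a + ∑ i ∈ Sᶜ, α (p i z)
    have hsplitf : ∑ i ∈ S, f i + ∑ i ∈ Sᶜ, f i = ∑ i, f i :=
      Finset.sum_add_sum_compl S f
    have h2 : D ≤ ∑ i ∈ S, f i + (S.card : ℝ) * a := by
      calc D ≤ ∑ i ∈ S, (f i + a) := hS2
        _ = ∑ i ∈ S, f i + (S.card : ℝ) * a := by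
            rw [Finset.sum_add_distrib, Finset.sum_const, nsmul_eq_mul]
    have h3 : ∑ i ∈ Sᶜ, f i ≤ (S.card : ℝ) * a := by
      rw [hDsum] at h2
      linarith [hsplitf]
    have h4 : ∑ i ∈ Sᶜ, f i = ∑ i ∈ Sᶜ, α (p i w) - ∑ i ∈ Sᶜ, α (p i z) := by
      simp [hf, Finset.sum_sub_distrib]
    linarith
  -- q changes the winner set
  have hqne : winners α q ≠ winners α p := by
    rw [hwin]
    intro hcontra
    have hwwin : w ∈ winners α q := by rw [hcontra]; rfl
    have hzwin : z ∈ winners α q := by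
      intro y
      exact le_trans (hwwin y) hqwz
    rw [hcontra] at hzwin
    exact hz hzwin
  have hdiffle : diffCount p q ≤ S.card := by
    apply Finset.card_le_card
    intro i hi
    simp only [Finset.mem_filter, Finset.mem_univ, true_and] at hi
    by_contra hiS
    exact hi (hq_out i hiS).symm
  have hmem : diffCount p q ∈ {d | ∃ q' : Fin n → Vote m, diffCount p q' = d ∧
      winners α q' ≠ winners α p} := ⟨q, rfl, hqne⟩
  have hMle : MoV (winners α) p ≤ diffCount p q := Nat.sInf_le hmem
  constructor
  · -- lower bound
    have hM2 : (MoV (winners α) p : ℝ) ≤ (S.card : ℝ) := by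
      exact_mod_cast le_trans hMle hdiffle
    calc a * ((MoV (winners α) p : ℝ) - 1) ≤ a * ((S.card : ℝ) - 1) := by
          apply mul_le_mul_of_nonneg_left _ hapos.le
          linarith
      _ = ((S.card : ℝ) - 1) * a := mul_comm _ _
      _ ≤ D := hS1
  · -- upper bound
    have hsetne : {d | ∃ q' : Fin n → Vote m, diffCount p q' = d ∧
        winners α q' ≠ winners α p}.Nonempty := ⟨diffCount p q, hmem⟩
    obtain ⟨q', hq'd, hq'ne⟩ := Nat.sInf_mem hsetne
    -- there is a winner of q' different from w
    obtain ⟨y, hy, hywin⟩ : ∃ y, y ≠ w ∧ y ∈ winners α q' := by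
      by_contra hcase
      push_neg at hcase
      apply hq'ne
      rw [hwin]
      obtain ⟨y0, -, hy0⟩ := Finset.exists_max_image univ (score α q') ⟨⟨0, h0⟩, Finset.mem_univ _⟩
      have hy0win : y0 ∈ winners α q' := fun y => hy0 y (Finset.mem_univ y)
      have hy0w : y0 = w := by
        by_contra hne
        exact hcase y0 hne hy0win
      ext x
      simp only [Set.mem_singleton_iff]
      constructor
      · intro hx
        by_contra hxw
        exact hcase x hxw hx
      · intro hx
        rw [hx, ← hy0w]
        exact hy0win
    have h1 : score α p w - score α q' w ≤ a * (diffCount p q' : ℝ) := by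
      have := key p q' w
      rwa [show (univ.filter fun i => p i ≠ q' i).card = diffCount p q' from rfl] at this
    have h2 : score α q' y - score α p y ≤ a * (diffCount p q' : ℝ) := keyswap q' y
    have h3 : score α q' w ≤ score α q' y := hywin w
    have h4 : score α p y ≤ score α p z := hz2 y hy
    have hq'M : diffCount p q' = MoV (winners α) p := hq'd
    rw [hq'M] at h1 h2
    calc D ≤ score α p w - score α p y := by simp only [hDdef]; linarith
      _ ≤ 2 * a * (MoV (winners α) p : ℝ) := by linarith
end

section
/- In a k-approval election E with unique winner w and second-highest scorer z, we have 2·(M(E) − 1) < s(w) − s(z) ≤ 2·M(E), where M(E) is the margin of victory. -/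
open Finset

/-- The `k`-approval score of candidate `x`: the number of votes ranking `x` within the
top `k` positions. -/
def appScore {n m : ℕ} (k : ℕ) (p : Fin n → Vote m) (x : Fin m) : ℕ :=
  (univ.filter fun i => (p i x : ℕ) < k).card

/-- The set of `k`-approval winners: candidates with maximum `k`-approval score. -/
def appWinners {n m : ℕ} (k : ℕ) (p : Fin n → Vote m) : Set (Fin m) :=
  {x | ∀ y, appScore k p y ≤ appScore k p x}

/-!
Replacing `d` votes changes every score by at most `d`. If the winner set changes, some
`y ≠ w` catches up with `w`, so `s(w) - d ≤ s(y) + d ≤ s(z) + d`, giving `s(w) - s(z) ≤ 2 M`.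
Conversely, at least `s(w) - s(z)` votes approve `w` but not `z`; exchanging `w` and `z` in
`⌈(s(w) - s(z)) / 2⌉` of them makes `z` a co-winner, so `M ≤ ⌈(s(w) - s(z)) / 2⌉`.
-/

variable {n m : ℕ}

lemma diffCount_comm (p q : Fin n → Vote m) : diffCount p q = diffCount q p := by
  simp only [diffCount, ne_comm]

lemma appScore_le_add_diffCount (k : ℕ) (p q : Fin n → Vote m) (x : Fin m) :
    appScore k p x ≤ appScore k q x + diffCount p q := by
  refine (card_le_card fun i hi => ?_).trans (card_union_le _ _)
  by_cases h : p i = q i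
  · simp_all [mem_filter]
  · simp [h]

lemma appScore_le_add_card_filter (k : ℕ) (p : Fin n → Vote m) (a b : Fin m) :
    appScore k p a ≤
      appScore k p b + #{i | (p i a : ℕ) < k ∧ ¬ (p i b : ℕ) < k} := by
  refine (card_le_card fun i hi => ?_).trans (card_union_le _ _)
  by_cases h : (p i b : ℕ) < k <;> simp_all

lemma appWinners_eq_singleton {k : ℕ} {p : Fin n → Vote m} {w : Fin m}
    (hw : ∀ y, y ≠ w → appScore k p y < appScore k p w) : appWinners k p = {w} := by
  ext x
  refine ⟨fun hx => by_contra fun hxw => (hw x hxw).not_ge (hx w), ?_⟩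
  rintro rfl y
  rcases eq_or_ne y x with rfl | hyx
  · exact le_rfl
  · exact (hw y hyx).le

lemma exists_ne_appScore_le_of_appWinners_ne_singleton {k : ℕ} {q : Fin n → Vote m}
    {w : Fin m} (hq : appWinners k q ≠ {w}) :
    ∃ y, y ≠ w ∧ appScore k q w ≤ appScore k q y := by
  by_contra! h
  exact hq (appWinners_eq_singleton h)

lemma appScore_le_add_two_mul_diffCount {k : ℕ} {p q : Fin n → Vote m} {w z : Fin m}
    (hw : ∀ y, y ≠ w → appScore k p y < appScore k p w)
    (hz : ∀ y, y ≠ w → appScore k p y ≤ appScore k p z)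
    (hq : appWinners k q ≠ appWinners k p) :
    appScore k p w ≤ appScore k p z + 2 * diffCount p q := by
  rw [appWinners_eq_singleton hw] at hq
  obtain ⟨y, hyw, hy⟩ := exists_ne_appScore_le_of_appWinners_ne_singleton hq
  have hpw := appScore_le_add_diffCount k p q w
  have hqy := appScore_le_add_diffCount k q p y
  rw [diffCount_comm] at hqy
  have := hz y hyw
  omega

def swapCandidates (p : Fin n → Vote m) (S : Finset (Fin n)) (a b : Fin m) :
    Fin n → Vote m :=
  fun i => if i ∈ S then (Equiv.swap a b).trans (p i) else p i

section swapCandidates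

variable {k : ℕ} {p : Fin n → Vote m} {S : Finset (Fin n)} {a b : Fin m}

lemma diffCount_swapCandidates (hab : a ≠ b) : diffCount p (swapCandidates p S a b) = #S := by
  unfold diffCount swapCandidates
  congr 1
  ext i
  by_cases hi : i ∈ S
  · simp only [mem_filter, mem_univ, true_and, hi, if_true, iff_true]
    intro h
    have := congrArg (· a) h
    simp only [Equiv.trans_apply, Equiv.swap_apply_left] at this
    exact hab ((p i).injective this)
  · simp [hi]

variable (hS : ∀ i ∈ S, (p i a : ℕ) < k ∧ ¬ (p i b : ℕ) < k)
include hS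

lemma appScore_swapCandidates_left :
    appScore k (swapCandidates p S a b) a + #S = appScore k p a := by
  have hsub : S ⊆ univ.filter fun i => (p i a : ℕ) < k := fun i hi => by simp [hS i hi]
  have : (univ.filter fun i => (swapCandidates p S a b i a : ℕ) < k) =
      (univ.filter fun i => (p i a : ℕ) < k) \ S := by
    ext i
    simp only [mem_filter, mem_univ, true_and, mem_sdiff]
    unfold swapCandidates
    by_cases hi : i ∈ S <;> simp [hi, hS]
  rw [appScore, this, card_sdiff_of_subset hsub, Nat.sub_add_cancel (card_le_card hsub)]
  rfl

lemma appScore_swapCandidates_right :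
    appScore k (swapCandidates p S a b) b = appScore k p b + #S := by
  have hdisj : Disjoint (univ.filter fun i => (p i b : ℕ) < k) S :=
    disjoint_left.mpr fun i hi hiS => (hS i hiS).2 (mem_filter.mp hi).2
  have : (univ.filter fun i => (swapCandidates p S a b i b : ℕ) < k) =
      (univ.filter fun i => (p i b : ℕ) < k) ∪ S := by
    ext i
    simp only [mem_filter, mem_univ, true_and, mem_union]
    unfold swapCandidates
    by_cases hi : i ∈ S <;> simp [hi, hS]
  rw [appScore, this, card_union_of_disjoint hdisj]
  rfl

omit hS in
lemma appScore_swapCandidates_of_ne {y : Fin m} (hya : y ≠ a) (hyb : y ≠ b) :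
    appScore k (swapCandidates p S a b) y = appScore k p y := by
  unfold appScore swapCandidates
  congr 1
  ext i
  by_cases hi : i ∈ S <;> simp [hi, Equiv.swap_apply_of_ne_of_ne hya hyb]

end swapCandidates

lemma exists_diffCount_eq_mem_appWinners {k : ℕ} {p : Fin n → Vote m} {w z : Fin m}
    (hz : z ≠ w) (hz2 : ∀ y, y ≠ w → appScore k p y ≤ appScore k p z) :
    ∃ q, diffCount p q = (appScore k p w - appScore k p z + 1) / 2 ∧ z ∈ appWinners k q := by
  have hA := appScore_le_add_card_filter k p w z
  obtain ⟨S, hSA, hS⟩ :=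
    exists_subset_card_eq (s := univ.filter fun i => (p i w : ℕ) < k ∧ ¬ (p i z : ℕ) < k)
      (n := (appScore k p w - appScore k p z + 1) / 2) (by omega)
  have hSwz : ∀ i ∈ S, (p i w : ℕ) < k ∧ ¬ (p i z : ℕ) < k := fun i hi => by
    simpa using hSA hi
  refine ⟨swapCandidates p S w z, by rw [diffCount_swapCandidates hz.symm, hS], fun y => ?_⟩
  have hqw := appScore_swapCandidates_left hSwz
  have hqz := appScore_swapCandidates_right hSwz
  rcases eq_or_ne y w with rfl | hyw
  · omega
  rcases eq_or_ne y z with rfl | hyz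
  · exact le_rfl
  rw [appScore_swapCandidates_of_ne hyw hyz]
  have := hz2 y hyw
  omega

theorem stmt4_general (n m k : ℕ)
    (p : Fin n → Vote m) (w z : Fin m)
    (hw : ∀ y, y ≠ w → appScore k p y < appScore k p w)
    (hz : z ≠ w) (hz2 : ∀ y, y ≠ w → appScore k p y ≤ appScore k p z) :
    2 * ((MoV (appWinners k) p : ℤ) - 1) < (appScore k p w : ℤ) - appScore k p z ∧
    (appScore k p w : ℤ) - appScore k p z ≤ 2 * (MoV (appWinners k) p : ℤ) := by
  obtain ⟨q, hqd, hzq⟩ := exists_diffCount_eq_mem_appWinners hz hz2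
  have hne : appWinners k q ≠ appWinners k p := fun h => (hw z hz).not_ge ((h ▸ hzq) w)
  have hle : MoV (appWinners k) p ≤ (appScore k p w - appScore k p z + 1) / 2 :=
    Nat.sInf_le ⟨q, hqd, hne⟩
  obtain ⟨q₀, hq₀d, hq₀ne⟩ : MoV (appWinners k) p ∈
      {d | ∃ q : Fin n → Vote m, diffCount p q = d ∧ appWinners k q ≠ appWinners k p} :=
    Nat.sInf_mem ⟨_, q, hqd, hne⟩
  have hge := appScore_le_add_two_mul_diffCount hw hz2 hq₀ne
  have hzw := hw z hz
  omega

/-- In a `k`-approval election with unique winner `w` and second-highest scorer `z`,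
`2(M(E) - 1) < s(w) - s(z) ≤ 2 M(E)`. -/
theorem stmt4 (n m k : ℕ) (hm : 2 ≤ m) (hn : 1 ≤ n) (hk1 : 1 ≤ k) (hkm : k < m)
    (p : Fin n → Vote m) (w z : Fin m)
    (hw : ∀ y, y ≠ w → appScore k p y < appScore k p w)
    (hz : z ≠ w) (hz2 : ∀ y, y ≠ w → appScore k p y ≤ appScore k p z) :
    2 * ((MoV (appWinners k) p : ℤ) - 1) < (appScore k p w : ℤ) - appScore k p z ∧
    (appScore k p w : ℤ) - appScore k p z ≤ 2 * (MoV (appWinners k) p : ℤ) :=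
  stmt4_general n m k p w z hw hz hz2
end

section
/- In a k-approval election with unique winner w and second-highest scorer z whose margin of victory is M, the number of votes in which w appears within the top k positions and z does not appear within the top k positions is at least M. -/
open Finset

/-- In a `k`-approval election with unique winner `w` and second-highest scorer `z`
and margin of victory `M`, the number of favorable votes (ranking `w` within the top
`k` positions but not `z`) is at least `M`. -/
theorem stmt5 (n m k : ℕ) (hm : 2 ≤ m) (hn : 1 ≤ n) (hk1 : 1 ≤ k) (hkm : k < m)
    (p : Fin n → Vote m) (w z : Fin m)
    (hw : ∀ y, y ≠ w → appScore k p y < appScore k p w)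
    (hz : z ≠ w) (hz2 : ∀ y, y ≠ w → appScore k p y ≤ appScore k p z) :
    MoV (appWinners k) p ≤
      (univ.filter fun i => (p i w : ℕ) < k ∧ ¬ ((p i z : ℕ) < k)).card := by
  classical
  have hzw : appScore k p z < appScore k p w := hw z hz
  set fav : Fin n → Prop := fun i => (p i w : ℕ) < k ∧ ¬ ((p i z : ℕ) < k) with hfavdef
  set F := (univ.filter fun i => fav i).card with hF
  -- F is positive
  have hF1 : 0 < F := by
    rcases Nat.eq_zero_or_pos F with h0 | h
    · exfalso
      have hempty : ∀ i, ¬ fav i := by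
        intro i hi
        have hmem : i ∈ univ.filter fun i => fav i := by simp only [mem_filter, mem_univ, true_and]; exact hi
        rw [Finset.card_eq_zero.mp h0] at hmem
        exact absurd hmem (Finset.notMem_empty i)
      have hsub : (univ.filter fun i => (p i w : ℕ) < k) ⊆
          univ.filter fun i => (p i z : ℕ) < k := by
        intro i hi
        simp only [mem_filter, mem_univ, true_and] at hi ⊢
        by_contra hc
        exact hempty i ⟨hi, hc⟩
      have := Finset.card_le_card hsub
      unfold appScore at hzw
      omega
    · exact h
  set q : Fin n → Vote m := fun i => if fav i then (Equiv.swap w z).trans (p i) else p i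
    with hqdef
  have hqw : ∀ i, q i w = if fav i then p i z else p i w := by
    intro i
    simp only [hqdef]
    split <;> simp [Equiv.trans_apply, Equiv.swap_apply_left]
  have hqz : ∀ i, q i z = if fav i then p i w else p i z := by
    intro i
    simp only [hqdef]
    split <;> simp [Equiv.trans_apply, Equiv.swap_apply_right]
  have hdiff : diffCount p q = F := by
    unfold diffCount
    rw [hF]
    congr 1
    apply filter_congr
    intro i _
    constructor
    · intro hne
      by_contra h
      simp only [hqdef, if_neg h] at hne
      exact hne rfl
    · intro h
      intro heq
      have h1 : p i w = q i w := by rw [heq]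
      rw [hqw i, if_pos h] at h1
      have h2 : (p i w : ℕ) = (p i z : ℕ) := by rw [h1]
      exact h.2 (h2 ▸ h.1)
  -- score of w in q
  have hsqw : appScore k q w = (univ.filter fun i => (p i w : ℕ) < k ∧ (p i z : ℕ) < k).card := by
    unfold appScore
    congr 1
    apply filter_congr
    intro i _
    rw [hqw i]
    by_cases h : fav i
    · rw [if_pos h]
      have := h.1; have := h.2
      constructor
      · intro hlt; exact absurd hlt h.2
      · intro hc; exact absurd hc.2 h.2
    · rw [if_neg h]
      simp only [hfavdef] at h
      push_neg at h
      constructor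
      · intro hlt; exact ⟨hlt, h hlt⟩
      · intro hc; exact hc.1
  -- score of z in q
  have hsqz : appScore k q z = F + appScore k p z := by
    unfold appScore
    have hfe : (univ.filter fun i => (q i z : ℕ) < k) =
        (univ.filter fun i => fav i) ∪ (univ.filter fun i => (p i z : ℕ) < k) := by
      ext i
      simp only [mem_filter, mem_univ, true_and, mem_union]
      rw [hqz i]
      by_cases h : fav i
      · rw [if_pos h]
        constructor
        · intro _; exact Or.inl h
        · intro _; exact h.1
      · rw [if_neg h]
        constructor
        · intro hlt; exact Or.inr hlt
        · intro hor
          rcases hor with h' | h'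
          · exact absurd h' h
          · exact h'
    rw [hfe, Finset.card_union_of_disjoint, hF]
    rw [Finset.disjoint_filter]
    intro i _ hi
    exact hi.2
  have hAle : (univ.filter fun i => (p i w : ℕ) < k ∧ (p i z : ℕ) < k).card ≤
      appScore k p z := by
    unfold appScore
    apply Finset.card_le_card
    intro i hi
    simp only [mem_filter, mem_univ, true_and] at hi ⊢
    exact hi.2
  have hlt : appScore k q w < appScore k q z := by
    rw [hsqw, hsqz]; omega
  have hwin : w ∈ appWinners k p := by
    intro y
    by_cases h : y = w
    · rw [h]
    · exact le_of_lt (hw y h)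
  have hne : appWinners k q ≠ appWinners k p := by
    intro heq
    have : w ∈ appWinners k q := heq ▸ hwin
    exact absurd (this z) (not_le.mpr hlt)
  calc MoV (appWinners k) p ≤ F := Nat.sInf_le ⟨q, hdiff, hne⟩
    _ = _ := by rw [hF]
end

section
/- In a maximin election E with unique winner w and second-highest maximin scorer z, we have 2·M(E) ≤ s(w) − s(z) ≤ 4·M(E), where M(E) is the margin of victory and s denotes maximin score. -/
open Finset

/-- `N(x,y)`: the number of votes preferring `x` to `y`. -/
def prefCount {n m : ℕ} (p : Fin n → Vote m) (x y : Fin m) : ℕ :=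
  (univ.filter fun i => (p i x : ℕ) < p i y).card

/-- `D(x,y) = N(x,y) - N(y,x)`. -/
def pairMargin {n m : ℕ} (p : Fin n → Vote m) (x y : Fin m) : ℤ :=
  (prefCount p x y : ℤ) - prefCount p y x

/-- The maximin score of `x`: the minimum of `D(x,y)` over `y ≠ x` (needs `2 ≤ m`). -/
def maximinScore {n m : ℕ} (hm : 2 ≤ m) (p : Fin n → Vote m) (x : Fin m) : ℤ :=
  (univ.erase x).inf' (by
    rw [← Finset.card_pos, Finset.card_erase_of_mem (Finset.mem_univ x),
      Finset.card_univ, Fintype.card_fin]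
    omega) (fun y => pairMargin p x y)

/-- The set of maximin winners: candidates with maximum maximin score. -/
def maximinWinners {n m : ℕ} (hm : 2 ≤ m) (p : Fin n → Vote m) : Set (Fin m) :=
  {x | ∀ y, maximinScore hm p y ≤ maximinScore hm p x}

lemma pref_add {n m : ℕ} (p : Fin n → Vote m) {x y : Fin m} (hxy : x ≠ y) :
    prefCount p x y + prefCount p y x = n := by
  have h : ∀ i : Fin n, ((p i y : ℕ) < p i x) ↔ ¬ ((p i x : ℕ) < p i y) := by
    intro i
    have hne : (p i x : ℕ) ≠ (p i y : ℕ) := by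
      simpa [Fin.val_eq_val] using (p i).injective.ne hxy
    omega
  have := Finset.card_filter_add_card_filter_not
    (s := (univ : Finset (Fin n))) (p := fun i => (p i x : ℕ) < p i y)
  unfold prefCount
  rw [Finset.filter_congr (fun i _ => h i)]
  simpa using this

lemma pm_sum {n m : ℕ} (p : Fin n → Vote m) {x y : Fin m} (hxy : x ≠ y) :
    pairMargin p x y = ∑ i : Fin n, (if (p i x : ℕ) < p i y then (1:ℤ) else -1) := by
  have h2 : ∑ i : Fin n, (if (p i x : ℕ) < p i y then (1:ℤ) else -1)
      = ∑ i : Fin n, ((if (p i x : ℕ) < p i y then (2:ℤ) else 0) - 1) := by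
    apply Finset.sum_congr rfl; intro i _; split <;> ring
  have h3 : ∑ i : Fin n, (if (p i x : ℕ) < p i y then (2:ℤ) else 0)
      = 2 * (prefCount p x y : ℤ) := by
    rw [← Finset.sum_filter]
    simp [prefCount, mul_comm]
  have h4 : (prefCount p x y : ℤ) + prefCount p y x = n := by
    exact_mod_cast pref_add p hxy
  rw [h2, Finset.sum_sub_distrib, h3]
  simp [pairMargin]
  omega

lemma pm_lip {n m : ℕ} (p q : Fin n → Vote m) {x y : Fin m} (hxy : x ≠ y) :
    |pairMargin q x y - pairMargin p x y| ≤ 2 * (diffCount p q : ℤ) := by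
  rw [pm_sum q hxy, pm_sum p hxy, ← Finset.sum_sub_distrib]
  set D := univ.filter fun i => p i ≠ q i with hD
  calc |∑ i : Fin n, ((if (q i x : ℕ) < q i y then (1:ℤ) else -1)
          - (if (p i x : ℕ) < p i y then (1:ℤ) else -1))|
      ≤ ∑ i : Fin n, |(if (q i x : ℕ) < q i y then (1:ℤ) else -1)
          - (if (p i x : ℕ) < p i y then (1:ℤ) else -1)| := Finset.abs_sum_le_sum_abs _ _
    _ = ∑ i ∈ D, |(if (q i x : ℕ) < q i y then (1:ℤ) else -1)
          - (if (p i x : ℕ) < p i y then (1:ℤ) else -1)| := by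
        refine (Finset.sum_subset (Finset.subset_univ D) ?_).symm
        intro i _ hiD
        have : p i = q i := by
          by_contra hc
          exact hiD (Finset.mem_filter.mpr ⟨Finset.mem_univ i, hc⟩)
        simp [this]
    _ ≤ ∑ i ∈ D, 2 := by
        apply Finset.sum_le_sum
        intro i _
        split <;> split <;> simp
    _ = 2 * (diffCount p q : ℤ) := by
        rw [Finset.sum_const]
        simp [diffCount, hD, mul_comm]

lemma score_le {n m : ℕ} (hm : 2 ≤ m) (p : Fin n → Vote m) {x y : Fin m} (hxy : y ≠ x) :
    maximinScore hm p x ≤ pairMargin p x y :=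
  Finset.inf'_le _ (Finset.mem_erase.mpr ⟨hxy, Finset.mem_univ _⟩)

lemma le_score {n m : ℕ} (hm : 2 ≤ m) (p : Fin n → Vote m) {x : Fin m} {c : ℤ}
    (h : ∀ y, y ≠ x → c ≤ pairMargin p x y) : c ≤ maximinScore hm p x :=
  Finset.le_inf' _ _ (fun y hy => h y (Finset.mem_erase.mp hy).1)

lemma score_exists {n m : ℕ} (hm : 2 ≤ m) (p : Fin n → Vote m) (x : Fin m) :
    ∃ y, y ≠ x ∧ maximinScore hm p x = pairMargin p x y := by
  obtain ⟨y, hy, hval⟩ := Finset.exists_mem_eq_inf' (s := univ.erase x)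
    (by rw [← Finset.card_pos, Finset.card_erase_of_mem (Finset.mem_univ x),
      Finset.card_univ, Fintype.card_fin]; omega) (fun y => pairMargin p x y)
  exact ⟨y, (Finset.mem_erase.mp hy).1, hval⟩

lemma score_lip_lower {n m : ℕ} (hm : 2 ≤ m) (p q : Fin n → Vote m) (x : Fin m) :
    maximinScore hm p x - 2 * (diffCount p q : ℤ) ≤ maximinScore hm q x := by
  apply le_score
  intro y hy
  have h1 := score_le hm p hy
  have h2 := abs_le.mp (pm_lip p q (x := x) (y := y) (fun h => hy h.symm))
  linarith [h2.1]

lemma score_lip_upper {n m : ℕ} (hm : 2 ≤ m) (p q : Fin n → Vote m) (x : Fin m) :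
    maximinScore hm q x ≤ maximinScore hm p x + 2 * (diffCount p q : ℤ) := by
  obtain ⟨y, hy, hval⟩ := score_exists hm p x
  have h1 := score_le hm q (x := x) (y := y) hy
  have h2 := abs_le.mp (pm_lip p q (x := x) (y := y) (fun h => hy h.symm))
  linarith [h2.2]

lemma winners_singleton {n m : ℕ} (hm : 2 ≤ m) (q : Fin n → Vote m) (w : Fin m)
    (h : ∀ y, y ≠ w → maximinScore hm q y < maximinScore hm q w) :
    maximinWinners hm q = {w} := by
  ext x
  simp only [maximinWinners, Set.mem_setOf_eq, Set.mem_singleton_iff]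
  constructor
  · intro hx
    by_contra hxw
    exact absurd (hx w) (not_le.mpr (h x hxw))
  · rintro rfl y
    by_cases hy : y = x
    · exact hy ▸ le_refl _
    · exact le_of_lt (h y hy)

/-- In a maximin election with unique winner `w` and second-highest maximin scorer `z`,
`2 M(E) ≤ s(w) - s(z) ≤ 4 M(E)`. -/
theorem stmt7 (n m : ℕ) (hm : 2 ≤ m) (hn : 1 ≤ n)
    (p : Fin n → Vote m) (w z : Fin m)
    (hw : ∀ y, y ≠ w → maximinScore hm p y < maximinScore hm p w)
    (hz : z ≠ w) (hz2 : ∀ y, y ≠ w → maximinScore hm p y ≤ maximinScore hm p z) :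
    2 * (MoV (maximinWinners hm) p : ℤ) ≤ maximinScore hm p w - maximinScore hm p z ∧
    maximinScore hm p w - maximinScore hm p z ≤ 4 * (MoV (maximinWinners hm) p : ℤ) := by
  have hWp : maximinWinners hm p = {w} := winners_singleton hm p w hw
  -- attained minima
  obtain ⟨y0, hy0w, hy0⟩ := score_exists hm p w
  obtain ⟨u0, hu0z, hu0⟩ := score_exists hm p z
  -- parity: gap is even
  have hpw : (prefCount p w y0 : ℤ) + prefCount p y0 w = n := by
    exact_mod_cast pref_add p (fun h => hy0w (h.symm))
  have hpz : (prefCount p z u0 : ℤ) + prefCount p u0 z = n := by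
    exact_mod_cast pref_add p (fun h => hu0z (h.symm))
  have hgap_pos : maximinScore hm p z < maximinScore hm p w := hw z hz
  -- k : the half-gap
  have hsw2 : maximinScore hm p w = 2 * (prefCount p w y0 : ℤ) - n := by
    rw [hy0]; simp only [pairMargin]; omega
  have hsz2 : maximinScore hm p z = 2 * (prefCount p z u0 : ℤ) - n := by
    rw [hu0]; simp only [pairMargin]; omega
  have hab : (prefCount p z u0 : ℤ) < prefCount p w y0 := by omega
  obtain ⟨k, hk⟩ : ∃ k : ℕ,
      maximinScore hm p w - maximinScore hm p z = 2 * k := by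
    refine ⟨prefCount p w y0 - prefCount p z u0, ?_⟩
    have hle : prefCount p z u0 ≤ prefCount p w y0 := by exact_mod_cast hab.le
    push_cast [hle]
    omega
  have hk_le : k ≤ prefCount p w y0 := by
    have : (k : ℤ) ≤ prefCount p w y0 := by omega
    exact_mod_cast this
  -- the manipulating vote σ : z first, w last
  have hm1 : m - 1 < m := by omega
  set last : Fin m := ⟨m - 1, hm1⟩ with hlast
  set zero : Fin m := ⟨0, by omega⟩ with hzero
  have hlz : last ≠ zero := by
    simp only [hlast, hzero, Ne, Fin.mk.injEq]
    omega
  set e1 : Vote m := Equiv.swap z zero with he1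
  have hw'0 : e1 w ≠ zero := by
    intro h
    have : e1 w = e1 z := by rw [h, he1, Equiv.swap_apply_left]
    exact hz (e1.injective this).symm
  set σ : Vote m := e1.trans (Equiv.swap (e1 w) last) with hσ
  have hσz : σ z = zero := by
    simp only [hσ, Equiv.trans_apply, he1, Equiv.swap_apply_left]
    rw [Equiv.swap_apply_of_ne_of_ne (by simpa [he1] using hw'0.symm) hlz.symm]
  have hσw : σ w = last := by
    simp only [hσ, Equiv.trans_apply, Equiv.swap_apply_left]
  have hσ_top : ∀ y, y ≠ z → (σ z : ℕ) < σ y := by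
    intro y hy
    have : σ y ≠ σ z := fun h => hy (σ.injective h)
    rw [hσz] at this ⊢
    have : (σ y : ℕ) ≠ 0 := by
      intro h; exact this (Fin.ext (by simpa [hzero] using h))
    simp only [hzero]
    omega
  have hσ_bot : ∀ y, y ≠ w → (σ y : ℕ) < σ w := by
    intro y hy
    have hne : σ y ≠ σ w := fun h => hy (σ.injective h)
    rw [hσw] at hne ⊢
    have h1 : (σ y : ℕ) < m := (σ y).isLt
    have h2 : (σ y : ℕ) ≠ m - 1 := by
      intro h; exact hne (Fin.ext (by simpa [hlast] using h))
    simp only [hlast]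
    omega
  -- choose S ⊆ votes where w beats y0, |S| = k
  set T : Finset (Fin n) := univ.filter (fun i => (p i w : ℕ) < p i y0) with hT
  have hTcard : T.card = prefCount p w y0 := rfl
  obtain ⟨S, hST, hScard⟩ := Finset.exists_subset_card_eq (hTcard ▸ hk_le : k ≤ T.card)
  set q : Fin n → Vote m := fun i => if i ∈ S then σ else p i with hq
  have hqS : ∀ i ∈ S, q i = σ := fun i hi => by simp [hq, hi]
  have hqS' : ∀ i ∉ S, q i = p i := fun i hi => by simp [hq, hi]
  have hd : diffCount p q ≤ k := by
    rw [← hScard]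
    apply Finset.card_le_card
    intro i hi
    rw [Finset.mem_filter] at hi
    by_contra hiS
    exact hi.2 (hqS' i hiS).symm
  -- z's score does not decrease
  have hz_up : maximinScore hm p z ≤ maximinScore hm q z := by
    apply le_score
    intro y hy
    refine le_trans (score_le hm p hy) ?_
    have hzy : z ≠ y := Ne.symm hy
    rw [pm_sum p hzy, pm_sum q hzy]
    apply Finset.sum_le_sum
    intro i _
    by_cases hi : i ∈ S
    · rw [hqS i hi]
      rw [if_pos (hσ_top y hy)]
      split <;> simp
    · rw [hqS' i hi]
  -- w's margin against y0 drops by exactly 2k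
  have hwy0 : w ≠ y0 := fun h => hy0w h.symm
  have hq_wy0 : pairMargin q w y0 = pairMargin p w y0 - 2 * k := by
    have key : pairMargin q w y0 - pairMargin p w y0 = -2 * k := by
      rw [pm_sum q hwy0, pm_sum p hwy0, ← Finset.sum_sub_distrib]
      have : ∑ i : Fin n, ((if (q i w : ℕ) < q i y0 then (1:ℤ) else -1)
          - (if (p i w : ℕ) < p i y0 then (1:ℤ) else -1))
          = ∑ i ∈ S, ((if (q i w : ℕ) < q i y0 then (1:ℤ) else -1)
          - (if (p i w : ℕ) < p i y0 then (1:ℤ) else -1)) := by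
        refine (Finset.sum_subset (Finset.subset_univ S) ?_).symm
        intro i _ hiS
        rw [hqS' i hiS]
        simp
      rw [this]
      have : ∀ i ∈ S, ((if (q i w : ℕ) < q i y0 then (1:ℤ) else -1)
          - (if (p i w : ℕ) < p i y0 then (1:ℤ) else -1)) = -2 := by
        intro i hi
        have h1 : (p i w : ℕ) < p i y0 := (Finset.mem_filter.mp (hST hi)).2
        have h2 : ¬ ((q i w : ℕ) < q i y0) := by
          rw [hqS i hi]
          exact not_lt.mpr (le_of_lt (hσ_bot y0 (fun h => hwy0 h.symm)))
        rw [if_neg h2, if_pos h1]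
        ring
      rw [Finset.sum_congr rfl this, Finset.sum_const, hScard]
      simp [mul_comm]
    omega
  -- therefore w's score drops to at most s z
  have hw_down : maximinScore hm q w ≤ maximinScore hm p z := by
    refine le_trans (score_le hm q (fun h => hwy0 h.symm)) ?_
    rw [hq_wy0, ← hy0]
    omega
  -- the winner set changes
  have hWq : maximinWinners hm q ≠ maximinWinners hm p := by
    rw [hWp]
    intro hcon
    have hwin : w ∈ maximinWinners hm q := by rw [hcon]; exact rfl
    have hzin : z ∈ maximinWinners hm q := by
      intro y
      exact le_trans (hwin y) (le_trans hw_down hz_up)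
    rw [hcon] at hzin
    exact hz hzin
  -- MoV ≤ k
  have hMoV_le : MoV (maximinWinners hm) p ≤ k :=
    le_trans (Nat.sInf_le ⟨q, rfl, hWq⟩) hd
  have hne : {d | ∃ q' : Fin n → Vote m, diffCount p q' = d ∧
      maximinWinners hm q' ≠ maximinWinners hm p}.Nonempty :=
    ⟨diffCount p q, q, rfl, hWq⟩
  constructor
  · -- lower bound: 2 MoV ≤ gap = 2k
    have : (MoV (maximinWinners hm) p : ℤ) ≤ k := by exact_mod_cast hMoV_le
    omega
  · -- upper bound: gap ≤ 4 MoV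
    obtain ⟨q0, hq0d, hq0ne⟩ := Nat.sInf_mem hne
    set d : ℕ := MoV (maximinWinners hm) p with hdd
    have hq0d' : diffCount p q0 = d := hq0d
    -- find y ≠ w with s_{q0} w ≤ s_{q0} y
    obtain ⟨y, hyw, hyge⟩ : ∃ y, y ≠ w ∧ maximinScore hm q0 w ≤ maximinScore hm q0 y := by
      by_contra hcon
      push_neg at hcon
      have : ∀ y, y ≠ w → maximinScore hm q0 y < maximinScore hm q0 w := by
        intro y hy; exact hcon y hy
      exact hq0ne (by rw [winners_singleton hm q0 w this, hWp])
    have h1 := score_lip_lower hm p q0 w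
    have h2 := score_lip_upper hm p q0 y
    have h3 := hz2 y hyw
    rw [hq0d'] at h1 h2
    linarith
end

section
/- Subject to the constraints 0 ≤ s(x) ≤ n for all x ∈ C and Σ_{x∈C} s(x) = k·n, if a ≥ 4, then Σ_{x∈C} exp(−a·n/s(x)) ≤ k·exp(−a), with the convention exp(−a·n/0) = 0. -/
open scoped Classical in
/-- Subject to `0 ≤ s(x) ≤ n` and `∑ s(x) = k·n`, if `a ≥ 4` then
`∑ exp(-a·n/s(x)) ≤ k·exp(-a)`, with the convention that a term with `s(x) = 0` is `0`. -/
theorem stmt11 {C : Type*} [Fintype C] (k : ℕ) (hk : k ≤ Fintype.card C)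
    (n a : ℝ) (hn : 0 < n) (ha : 4 ≤ a) (s : C → ℝ)
    (hs : ∀ x, s x ∈ Set.Icc (0 : ℝ) n) (hsum : ∑ x, s x = k * n) :
    ∑ x, (if s x = 0 then 0 else Real.exp (-(a * n) / s x)) ≤ k * Real.exp (-a) := by
  have key : ∀ x, (if s x = 0 then 0 else Real.exp (-(a * n) / s x))
      ≤ s x / n * Real.exp (-a) := by
    intro x
    obtain ⟨h0, h1⟩ := hs x
    by_cases h : s x = 0
    · rw [if_pos h]
      positivity
    · rw [if_neg h]
      have ht : 0 < s x := lt_of_le_of_ne h0 (Ne.symm h)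
      have hl : 1 - n / s x ≤ Real.log (s x / n) := by
        have h2 := Real.log_le_sub_one_of_pos (show 0 < n / s x by positivity)
        rw [Real.log_div hn.ne' ht.ne'] at h2
        rw [Real.log_div ht.ne' hn.ne']
        linarith
      have hns : 1 ≤ n / s x := (one_le_div ht).mpr h1
      have h2 : a * (1 - n / s x) ≤ 1 - n / s x := by nlinarith
      have h3 : -(a * n) / s x = a * (1 - n / s x) + (-a) := by
        field_simp
        ring
      calc Real.exp (-(a * n) / s x) ≤ Real.exp (Real.log (s x / n) + (-a)) := by
            apply Real.exp_le_exp.mpr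
            rw [h3]
            linarith
        _ = s x / n * Real.exp (-a) := by
            rw [Real.exp_add, Real.exp_log (by positivity)]
  calc ∑ x, (if s x = 0 then 0 else Real.exp (-(a * n) / s x))
      ≤ ∑ x, s x / n * Real.exp (-a) := Finset.sum_le_sum fun x _ => key x
    _ = (∑ x, s x) / n * Real.exp (-a) := by
        rw [← Finset.sum_mul, ← Finset.sum_div]
    _ = k * Real.exp (-a) := by
        rw [hsum]
        field_simp
end

section
/- In a Bucklin election with n voters and winner w having Bucklin score ℓ (so n_ℓ(w) > n/2), for any candidate x ≠ w and any ℓ' with n_{ℓ'}(x) ≤ n/2, one can change at most n_{ℓ'}(w) − n_{ℓ'}(x) + 1 votes (when n_{ℓ'}(w) > n/2) so that in the modified election w is ranked in the top ℓ' positions in at most ⌊n/2⌋ votes while x is ranked in the top ℓ' positions in more than n/2 votes; hence the margin of victory is at most n_{ℓ'}(w) − n_{ℓ'}(x) + 1. -/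
open Finset

/-- `topCount ℓ p x` is `n_ℓ(x)`: the number of votes ranking `x` within the top `ℓ`
positions. -/
def topCount {n m : ℕ} (ℓ : ℕ) (p : Fin n → Vote m) (x : Fin m) : ℕ :=
  (univ.filter fun i => (p i x : ℕ) < ℓ).card

/-- The Bucklin score of `x`: the least `ℓ` such that more than half of the votes rank `x`
within the top `ℓ` positions. -/
noncomputable def bucklinScore {n m : ℕ} (p : Fin n → Vote m) (x : Fin m) : ℕ :=
  sInf {ℓ | n < 2 * topCount ℓ p x}

/-- The set of Bucklin winners: candidates with minimum Bucklin score. -/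
def bucklinWinners {n m : ℕ} (p : Fin n → Vote m) : Set (Fin m) :=
  {x | ∀ y, bucklinScore p x ≤ bucklinScore p y}

lemma topCount_mono {n m : ℕ} (p : Fin n → Vote m) (x : Fin m) {ℓ ℓ'' : ℕ} (h : ℓ ≤ ℓ'') :
    topCount ℓ p x ≤ topCount ℓ'' p x := by
  apply Finset.card_le_card
  intro i hi
  simp only [mem_filter, mem_univ, true_and] at hi ⊢
  omega

/-- If `w` is the unique Bucklin winner, `ℓ' ∈ [m-1]`, `n_{ℓ'}(w) > n/2` and
`n_{ℓ'}(x) ≤ n/2` for `x ≠ w`, then by changing at most `n_{ℓ'}(w) - n_{ℓ'}(x) + 1`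
votes one can ensure that `w` is ranked in the top `ℓ'` positions in at most `⌊n/2⌋`
votes while `x` is ranked in the top `ℓ'` positions in more than `n/2` votes; hence
the margin of victory is at most `n_{ℓ'}(w) - n_{ℓ'}(x) + 1`. -/
theorem stmt12 (n m : ℕ) (hm : 2 ≤ m) (hn : 1 ≤ n)
    (p : Fin n → Vote m) (w x : Fin m) (hw : bucklinWinners p = {w})
    (ℓ' : ℕ) (hℓ1 : 1 ≤ ℓ') (hℓ2 : ℓ' ≤ m - 1)
    (hwmaj : n < 2 * topCount ℓ' p w) (hx : x ≠ w) (hxmin : 2 * topCount ℓ' p x ≤ n) :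
    (∃ q : Fin n → Vote m,
      diffCount p q ≤ topCount ℓ' p w - topCount ℓ' p x + 1 ∧
      topCount ℓ' q w ≤ n / 2 ∧ n < 2 * topCount ℓ' q x) ∧
    MoV bucklinWinners p ≤ topCount ℓ' p w - topCount ℓ' p x + 1 := by
  classical
  set A := univ.filter (fun i : Fin n => (p i w : ℕ) < ℓ') with hA
  set B := univ.filter (fun i : Fin n => (p i x : ℕ) < ℓ') with hB
  have hacard : topCount ℓ' p w = A.card := rfl
  have hbcard : topCount ℓ' p x = B.card := rfl
  have hsub : A.card - B.card ≤ (A \ B).card := by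
    have h1 : (A ∩ B).card ≤ B.card := card_le_card inter_subset_right
    have h2 := Finset.card_sdiff_add_card_inter A B
    omega
  obtain ⟨S, hSsub, hScard⟩ := Finset.exists_subset_card_eq hsub
  have hSA : S ⊆ A := hSsub.trans sdiff_subset
  set q : Fin n → Vote m :=
    fun i => if i ∈ S then (p i).trans (Equiv.swap (p i w) (p i x)) else p i with hq
  have hqw : ∀ i ∈ S, (q i) w = p i x := by
    intro i hi; simp [hq, hi, Equiv.swap_apply_left]
  have hqx : ∀ i ∈ S, (q i) x = p i w := by
    intro i hi; simp [hq, hi, Equiv.swap_apply_right]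
  have hqo : ∀ i ∉ S, q i = p i := by intro i hi; simp [hq, hi]
  -- the filter sets for q
  have hw_set : (univ.filter fun i : Fin n => ((q i) w : ℕ) < ℓ') = A \ S := by
    ext i
    simp only [mem_filter, mem_univ, true_and, mem_sdiff]
    by_cases hi : i ∈ S
    · have h2 : i ∉ B := (mem_sdiff.mp (hSsub hi)).2
      rw [hqw i hi]
      simp only [hi, not_true, and_false, iff_false]
      intro h
      exact h2 (by simp [hB, h])
    · rw [hqo i hi]
      simp [hA, hi]
  have hx_set : (univ.filter fun i : Fin n => ((q i) x : ℕ) < ℓ') = B ∪ S := by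
    ext i
    simp only [mem_filter, mem_univ, true_and, mem_union]
    by_cases hi : i ∈ S
    · rw [hqx i hi]
      have h1 : i ∈ A := hSA hi
      simp only [hi, or_true, iff_true]
      exact (mem_filter.mp h1).2
    · rw [hqo i hi]
      simp [hB, hi]
  have hdisj : Disjoint B S := by
    rw [disjoint_comm]
    exact disjoint_of_subset_left hSsub sdiff_disjoint
  have hqwcount : topCount ℓ' q w = B.card := by
    rw [topCount, hw_set, card_sdiff_of_subset hSA, hScard]
    have : B.card ≤ A.card := by omega
    omega
  have hqxcount : topCount ℓ' q x = A.card := by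
    rw [topCount, hx_set, card_union_of_disjoint hdisj, hScard]
    have : B.card ≤ A.card := by omega
    omega
  have hdiff : diffCount p q ≤ A.card - B.card := by
    rw [← hScard, diffCount]
    apply card_le_card
    intro i hi
    simp only [mem_filter, mem_univ, true_and] at hi
    by_contra hiS
    exact hi (hqo i hiS).symm
  have hxmaj : n < 2 * topCount ℓ' q x := by rw [hqxcount]; omega
  have hwmin : topCount ℓ' q w ≤ n / 2 := by
    rw [hqwcount]
    omega
  refine ⟨⟨q, by omega, hwmin, hxmaj⟩, ?_⟩
  -- MoV bound
  have hWne : bucklinWinners q ≠ bucklinWinners p := by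
    rw [hw]
    intro hcontra
    have hwin : w ∈ bucklinWinners q := by rw [hcontra]; rfl
    have hle : bucklinScore q w ≤ bucklinScore q x := hwin x
    have hxle : bucklinScore q x ≤ ℓ' := Nat.sInf_le hxmaj
    -- the set for w is nonempty (m works)
    have hmem : (bucklinScore q w) ∈ {ℓ | n < 2 * topCount ℓ q w} := by
      apply Nat.sInf_mem
      refine ⟨m, ?_⟩
      have : topCount m q w = n := by
        rw [topCount]
        rw [Finset.filter_true_of_mem, card_univ, Fintype.card_fin]
        intro i _
        exact (q i w).isLt
      simp only [Set.mem_setOf_eq, this]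
      omega
    simp only [Set.mem_setOf_eq] at hmem
    have hmono : topCount (bucklinScore q w) q w ≤ topCount ℓ' q w :=
      topCount_mono q w (le_trans hle hxle)
    omega
  calc MoV bucklinWinners p ≤ diffCount p q := Nat.sInf_le ⟨q, rfl, hWne⟩
    _ ≤ topCount ℓ' p w - topCount ℓ' p x + 1 := by omega
end

section
/- Suppose quantities D̄(x,y) approximate D(x,y) within additive error ε'n for all pairs of candidates, and define s'_t(x) and s̄'_t(x) as the (α-weighted) counts of candidates y with D(y,x) < 2t (resp. = 2t) using D and D̄ respectively. Then for all candidates x,y, the estimated relative margin R̄M(x,y) (minimum integer t with s̄'_{−t}(x) ≤ s̄'_t(y)) satisfies RM(x,y) − 2ε'n ≤ R̄M(x,y) ≤ RM(x,y) + 2ε'n, where RM(x,y) is the minimum integer t with s'_{−t}(x) ≤ s'_t(y). -/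
open Finset
open scoped Classical

/-- `s'_t(x)`: the `α`-weighted count `|{y ≠ x : D(y,x) < 2t}| + α·|{y ≠ x : D(y,x) = 2t}|`. -/
noncomputable def sPrime {C : Type*} [Fintype C] (α : ℝ) (D : C → C → ℤ)
    (t : ℤ) (x : C) : ℝ :=
  ((univ.filter fun y => y ≠ x ∧ D y x < 2 * t).card : ℝ)
    + α * ((univ.filter fun y => y ≠ x ∧ D y x = 2 * t).card : ℝ)

/-- The relative margin of victory `RM(x,y)`: the minimum integer `t` with
`s'_{-t}(x) ≤ s'_t(y)`. -/
noncomputable def relMargin {C : Type*} [Fintype C] (α : ℝ) (D : C → C → ℤ)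
    (x y : C) : ℤ :=
  sInf {t : ℤ | sPrime α D (-t) x ≤ sPrime α D t y}

lemma sPrime_nonneg {C : Type*} [Fintype C] {α : ℝ} (hα : 0 ≤ α)
    (D : C → C → ℤ) (t : ℤ) (x : C) : 0 ≤ sPrime α D t x := by
  unfold sPrime; positivity

lemma sPrime_rw {C : Type*} [Fintype C] (α : ℝ) (D : C → C → ℤ) (t : ℤ) (x : C) :
    sPrime α D t x = α * ((univ.filter fun y => y ≠ x ∧ D y x ≤ 2 * t).card : ℝ)
      + (1 - α) * ((univ.filter fun y => y ≠ x ∧ D y x < 2 * t).card : ℝ) := by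
  have h : (univ.filter fun y => y ≠ x ∧ D y x ≤ 2 * t)
      = (univ.filter fun y => y ≠ x ∧ D y x < 2 * t)
        ∪ (univ.filter fun y => y ≠ x ∧ D y x = 2 * t) := by
    ext z
    simp only [mem_filter, mem_univ, true_and, mem_union]
    constructor
    · rintro ⟨hz, hle⟩
      rcases lt_or_eq_of_le hle with h' | h'
      · exact Or.inl ⟨hz, h'⟩
      · exact Or.inr ⟨hz, h'⟩
    · rintro (⟨hz, h'⟩ | ⟨hz, h'⟩) <;> exact ⟨hz, by omega⟩
  have hd : Disjoint (univ.filter fun y => y ≠ x ∧ D y x < 2 * t)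
      (univ.filter fun y => y ≠ x ∧ D y x = 2 * t) := by
    rw [disjoint_left]
    intro a ha hb
    simp only [mem_filter, mem_univ, true_and] at ha hb
    omega
  rw [sPrime, h, card_union_of_disjoint hd]
  push_cast
  ring

lemma sPrime_mono {C : Type*} [Fintype C] {α : ℝ} (hα0 : 0 ≤ α) (hα1 : α ≤ 1)
    (D₁ D₂ : C → C → ℤ) (t₁ t₂ : ℤ) (x : C)
    (h : ∀ z, D₂ z x - D₁ z x ≤ 2 * t₂ - 2 * t₁) :
    sPrime α D₁ t₁ x ≤ sPrime α D₂ t₂ x := by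
  rw [sPrime_rw, sPrime_rw]
  have h1 : (univ.filter fun z => z ≠ x ∧ D₁ z x ≤ 2 * t₁).card
      ≤ (univ.filter fun z => z ≠ x ∧ D₂ z x ≤ 2 * t₂).card := by
    apply card_le_card
    intro z hz
    simp only [mem_filter, mem_univ, true_and] at hz ⊢
    exact ⟨hz.1, by have := h z; omega⟩
  have h2 : (univ.filter fun z => z ≠ x ∧ D₁ z x < 2 * t₁).card
      ≤ (univ.filter fun z => z ≠ x ∧ D₂ z x < 2 * t₂).card := by
    apply card_le_card
    intro z hz
    simp only [mem_filter, mem_univ, true_and] at hz ⊢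
    exact ⟨hz.1, by have := h z; omega⟩
  have c1 : ((univ.filter fun z => z ≠ x ∧ D₁ z x ≤ 2 * t₁).card : ℝ)
      ≤ ((univ.filter fun z => z ≠ x ∧ D₂ z x ≤ 2 * t₂).card : ℝ) := by exact_mod_cast h1
  have c2 : ((univ.filter fun z => z ≠ x ∧ D₁ z x < 2 * t₁).card : ℝ)
      ≤ ((univ.filter fun z => z ≠ x ∧ D₂ z x < 2 * t₂).card : ℝ) := by exact_mod_cast h2
  have := mul_le_mul_of_nonneg_left c1 hα0
  have := mul_le_mul_of_nonneg_left c2 (by linarith : (0:ℝ) ≤ 1 - α)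
  linarith

lemma relMargin_spec {C : Type*} [Fintype C] (hC : 2 ≤ Fintype.card C) {α : ℝ}
    (hα0 : 0 ≤ α) (D : C → C → ℤ) (x y : C) :
    sPrime α D (-(relMargin α D x y)) x ≤ sPrime α D (relMargin α D x y) y ∧
    ∀ t : ℤ, sPrime α D (-t) x ≤ sPrime α D t y → relMargin α D x y ≤ t := by
  set S : Set ℤ := {t : ℤ | sPrime α D (-t) x ≤ sPrime α D t y} with hS
  obtain ⟨x', hx'⟩ := Fintype.exists_ne_of_one_lt_card (by omega) x
  have hCne : Nonempty C := Fintype.card_pos_iff.mp (by omega)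
  have huniv : (univ : Finset C).Nonempty := univ_nonempty
  set B : ℤ := univ.sup' huniv fun z => max |D z x| |D z y| with hB
  have hBx : ∀ z, -B ≤ D z x ∧ D z x ≤ B := by
    intro z
    have : |D z x| ≤ B :=
      le_trans (le_max_left _ _)
        (Finset.le_sup' (f := fun z => max |D z x| |D z y|) (mem_univ z))
    exact abs_le.mp this
  have hBy : ∀ z, -B ≤ D z y ∧ D z y ≤ B := by
    intro z
    have : |D z y| ≤ B :=
      le_trans (le_max_right _ _)
        (Finset.le_sup' (f := fun z => max |D z x| |D z y|) (mem_univ z))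
    exact abs_le.mp this
  have hB0 : 0 ≤ B := le_trans (abs_nonneg (D x' x)) (abs_le.mpr (hBx x'))
  have hne : S.Nonempty := by
    refine ⟨B + 1, ?_⟩
    have e1 : (univ.filter fun z => z ≠ x ∧ D z x < 2 * (-(B+1))) = ∅ := by
      ext z
      simp only [mem_filter, mem_univ, true_and, notMem_empty, iff_false, not_and]
      intro _
      have := (hBx z).1
      omega
    have e2 : (univ.filter fun z => z ≠ x ∧ D z x = 2 * (-(B+1))) = ∅ := by
      ext z
      simp only [mem_filter, mem_univ, true_and, notMem_empty, iff_false, not_and]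
      intro _
      have := (hBx z).1
      omega
    have : sPrime α D (-(B+1)) x = 0 := by
      rw [sPrime, e1, e2]; simp
    show sPrime α D (-(B+1)) x ≤ sPrime α D (B+1) y
    rw [this]
    exact sPrime_nonneg hα0 D _ y
  have hlb : ∀ t ∈ S, -(B + 1) ≤ t := by
    intro t ht
    by_contra hcon
    push_neg at hcon
    have ht2 : t ≤ -(B + 2) := by omega
    -- sPrime α D (-t) x ≥ 1
    have e1 : (univ.filter fun z => z ≠ x ∧ D z x < 2 * (-t)) = univ.filter (fun z => z ≠ x) := by
      ext z
      simp only [mem_filter, mem_univ, true_and]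
      constructor
      · rintro ⟨hz, _⟩; exact hz
      · intro hz; exact ⟨hz, by have := (hBx z).2; omega⟩
    have hcard : 1 ≤ (univ.filter fun z => z ≠ x ∧ D z x < 2 * (-t)).card := by
      rw [e1]
      exact card_pos.mpr ⟨x', mem_filter.mpr ⟨mem_univ _, hx'⟩⟩
    have h1 : (1 : ℝ) ≤ sPrime α D (-t) x := by
      rw [sPrime]
      have : (1 : ℝ) ≤ ((univ.filter fun z => z ≠ x ∧ D z x < 2 * (-t)).card : ℝ) := by
        exact_mod_cast hcard
      have hnn : (0:ℝ) ≤ α * ((univ.filter fun z => z ≠ x ∧ D z x = 2 * (-t)).card : ℝ) := by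
        positivity
      linarith
    have e2 : (univ.filter fun z => z ≠ y ∧ D z y < 2 * t) = ∅ := by
      ext z
      simp only [mem_filter, mem_univ, true_and, notMem_empty, iff_false, not_and]
      intro _
      have := (hBy z).1
      omega
    have e3 : (univ.filter fun z => z ≠ y ∧ D z y = 2 * t) = ∅ := by
      ext z
      simp only [mem_filter, mem_univ, true_and, notMem_empty, iff_false, not_and]
      intro _
      have := (hBy z).1
      omega
    have h2 : sPrime α D t y = 0 := by rw [sPrime, e2, e3]; simp
    have : sPrime α D (-t) x ≤ sPrime α D t y := ht
    rw [h2] at this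
    linarith
  have hbdd : BddBelow S := ⟨-(B + 1), hlb⟩
  have hmem : sInf S ∈ S := Int.csInf_mem hne hbdd
  constructor
  · exact hmem
  · intro t ht
    exact csInf_le hbdd ht

/-- If `D̄` approximates the pairwise margins `D` within additive error `ε'n`, then the
estimated relative margin of victory approximates the true one within `2ε'n`. -/
theorem stmt14 {C : Type*} [Fintype C] (hC : 2 ≤ Fintype.card C)
    (α n ε' : ℝ) (hα0 : 0 ≤ α) (hα1 : α ≤ 1) (hn : 0 < n) (hε : 0 < ε')
    (D Dbar : C → C → ℤ)
    (hanti : ∀ x y, D x y = - D y x) (hanti' : ∀ x y, Dbar x y = - Dbar y x)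
    (happrox : ∀ x y, |(Dbar x y : ℝ) - D x y| ≤ ε' * n)
    (x y : C) (hxy : x ≠ y) :
    (relMargin α D x y : ℝ) - 2 * ε' * n ≤ relMargin α Dbar x y ∧
    (relMargin α Dbar x y : ℝ) ≤ relMargin α D x y + 2 * ε' * n := by
  have hεn : 0 < ε' * n := mul_pos hε hn
  by_cases hsmall : ε' * n < 1
  · -- then Dbar = D
    have heq : Dbar = D := by
      funext z w
      have h1 := happrox z w
      have h2 : |((Dbar z w - D z w : ℤ) : ℝ)| < 1 := by
        push_cast
        calc |(Dbar z w : ℝ) - D z w| ≤ ε' * n := h1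
        _ < 1 := hsmall
      have h3 : |Dbar z w - D z w| < 1 := by exact_mod_cast h2
      rw [abs_lt] at h3
      omega
    rw [heq]
    constructor <;> push_cast <;> linarith
  · push_neg at hsmall
    set k : ℤ := ⌈ε' * n / 2⌉ with hk
    have hk1 : ε' * n ≤ 2 * (k : ℝ) := by
      have := Int.le_ceil (ε' * n / 2)
      linarith
    have hk2 : (k : ℝ) ≤ 2 * (ε' * n) := by
      have := Int.ceil_lt_add_one (ε' * n / 2)
      linarith
    -- key approximation in ℤ : |Dbar z w - D z w| ≤ 2k
    have hZ : ∀ z w : C, Dbar z w - D z w ≤ 2 * k ∧ D z w - Dbar z w ≤ 2 * k := by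
      intro z w
      have h1 := abs_le.mp (happrox z w)
      constructor
      · have : ((Dbar z w - D z w : ℤ) : ℝ) ≤ ((2 * k : ℤ) : ℝ) := by push_cast; linarith [h1.2]
        exact_mod_cast this
      · have : ((D z w - Dbar z w : ℤ) : ℝ) ≤ ((2 * k : ℤ) : ℝ) := by push_cast; linarith [h1.1]
        exact_mod_cast this
    -- shifting lemma
    have hshift : ∀ (E F : C → C → ℤ), (∀ z w, E z w - F z w ≤ 2 * k ∧ F z w - E z w ≤ 2 * k) →
        ∀ t : ℤ, sPrime α E (-t) x ≤ sPrime α E t y →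
          sPrime α F (-(t + k)) x ≤ sPrime α F (t + k) y := by
      intro E F hEF t ht
      have hA : sPrime α F (-(t + k)) x ≤ sPrime α E (-t) x := by
        apply sPrime_mono hα0 hα1
        intro z
        have := (hEF z x).1
        omega
      have hB : sPrime α E t y ≤ sPrime α F (t + k) y := by
        apply sPrime_mono hα0 hα1
        intro z
        have := (hEF z y).2
        omega
      linarith
    obtain ⟨hmemD, hminD⟩ := relMargin_spec hC hα0 D x y
    obtain ⟨hmemDb, hminDb⟩ := relMargin_spec hC hα0 Dbar x y
    set r := relMargin α D x y
    set rb := relMargin α Dbar x y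
    have h1 : rb ≤ r + k := hminDb _ (hshift D Dbar (fun z w => ⟨(hZ z w).2, (hZ z w).1⟩) r hmemD)
    have h2 : r ≤ rb + k := hminD _ (hshift Dbar D (fun z w => ⟨(hZ z w).1, (hZ z w).2⟩) rb hmemDb)
    have c1 : (rb : ℝ) ≤ (r : ℝ) + (k : ℝ) := by exact_mod_cast h1
    have c2 : (r : ℝ) ≤ (rb : ℝ) + (k : ℝ) := by exact_mod_cast h2
    constructor
    · linarith
    · linarith
end

section
/- Distinguishing, with error probability at most δ ≤ 1/16, between a coin with heads probability 1/2 and a coin with heads probability 1/2 − ε requires at least (1/(4ε²))·ln(1/(8e√π·δ)) independent samples. -/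
/-!
A test with error at most `δ` under both hypotheses forces the overlap `∑ min(P, Q)` of the two
sample distributions to be at most `2δ`. By Cauchy–Schwarz this overlap is at least half the
square of the Bhattacharyya coefficient `∑ √(P Q)`, which is multiplicative over independent
samples; for one biased coin against a fair one its square is `1/2 + √(1/4 - ε²) ≥ exp(-4ε²)`.
Hence `exp(-4ε²ℓ) ≤ 4δ`, and taking logarithms gives the bound.
-/

open MeasureTheory

theorem integral_pi_toMeasure_eq_sum {ι α : Type*} [Fintype ι] [DecidableEq ι] [Fintype α]
    [MeasurableSpace α] [MeasurableSingletonClass α] (p : ι → PMF α) (f : (ι → α) → ℝ) :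
    ∫ s, f s ∂(Measure.pi fun i => (p i).toMeasure) = ∑ s, (∏ i, (p i (s i)).toReal) * f s := by
  rw [integral_fintype .of_finite]
  refine Finset.sum_congr rfl fun s _ => ?_
  simp [measureReal_def, PMF.toMeasure_apply_singleton _ _ (measurableSet_singleton _),
    ENNReal.toReal_prod]

theorem PMF.toReal_bernoulli_apply {p : NNReal} (h : p ≤ 1) (b : Bool) :
    (PMF.bernoulli p h b).toReal = if b then (p : ℝ) else 1 - p := by
  cases b <;> simp [PMF.bernoulli_apply, h]

section Bhattacharyya

variable {Ω : Type*} [Fintype Ω]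

noncomputable def bhattacharyya (p q : Ω → ℝ) : ℝ := ∑ s, √(p s * q s)

theorem sum_min_le_sum_mul_one_sub_add_sum_mul (p q : Ω → ℝ) {g : Ω → ℝ}
    (hg : ∀ s, g s ∈ Set.Icc (0 : ℝ) 1) :
    ∑ s, min (p s) (q s) ≤ ∑ s, p s * (1 - g s) + ∑ s, q s * g s := by
  rw [← Finset.sum_add_distrib]
  refine Finset.sum_le_sum fun s _ => ?_
  obtain ⟨hg0, hg1⟩ := hg s
  nlinarith [min_le_left (p s) (q s), min_le_right (p s) (q s)]

theorem bhattacharyya_sq_le {p q : Ω → ℝ} (hp : ∀ s, 0 ≤ p s) (hq : ∀ s, 0 ≤ q s) :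
    bhattacharyya p q ^ 2 ≤ (∑ s, p s + ∑ s, q s) * ∑ s, min (p s) (q s) := by
  have hmin s : 0 ≤ min (p s) (q s) := le_min (hp s) (hq s)
  have hmax s : 0 ≤ max (p s) (q s) := (hp s).trans (le_max_left _ _)
  calc bhattacharyya p q ^ 2
      = (∑ s, √(min (p s) (q s)) * √(max (p s) (q s))) ^ 2 := by
        simp only [bhattacharyya, ← Real.sqrt_mul (hmin _), min_mul_max]
    _ ≤ (∑ s, √(min (p s) (q s)) ^ 2) * ∑ s, √(max (p s) (q s)) ^ 2 :=
        Finset.sum_mul_sq_le_sq_mul_sq _ _ _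
    _ = (∑ s, max (p s) (q s)) * ∑ s, min (p s) (q s) := by
        simp only [Real.sq_sqrt (hmin _), Real.sq_sqrt (hmax _), mul_comm]
    _ ≤ (∑ s, p s + ∑ s, q s) * ∑ s, min (p s) (q s) := by
        rw [← Finset.sum_add_distrib]
        gcongr with s
        · exact Finset.sum_nonneg fun s _ => hmin s
        · exact max_le_add_of_nonneg (hp s) (hq s)

theorem sq_bhattacharyya_le_four_mul {p q g : Ω → ℝ} (hp : ∀ s, 0 ≤ p s) (hq : ∀ s, 0 ≤ q s)
    (hp₁ : ∑ s, p s = 1) (hq₁ : ∑ s, q s = 1) (hg : ∀ s, g s ∈ Set.Icc (0 : ℝ) 1) {δ : ℝ}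
    (hpg : ∑ s, p s * (1 - g s) ≤ δ) (hqg : ∑ s, q s * g s ≤ δ) :
    bhattacharyya p q ^ 2 ≤ 4 * δ := by
  have hmin := sum_min_le_sum_mul_one_sub_add_sum_mul p q hg
  have hsq := bhattacharyya_sq_le hp hq
  rw [hp₁, hq₁] at hsq
  linarith

theorem bhattacharyya_pi {ι α : Type*} [Fintype ι] [DecidableEq ι] [Fintype α] {p q : ι → α → ℝ}
    (hp : ∀ i a, 0 ≤ p i a) (hq : ∀ i a, 0 ≤ q i a) :
    bhattacharyya (fun s : ι → α => ∏ i, p i (s i)) (fun s => ∏ i, q i (s i))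
      = ∏ i, bhattacharyya (p i) (q i) := by
  simp only [bhattacharyya, Fintype.prod_sum, ← Finset.prod_mul_distrib]
  refine Finset.sum_congr rfl fun s _ => ?_
  rw [Real.sqrt_prod _ fun i _ => mul_nonneg (hp i _) (hq i _)]

theorem sum_prod_eq_one {ι α : Type*} [Fintype ι] [DecidableEq ι] [Fintype α] {p : ι → α → ℝ}
    (hp : ∀ i, ∑ a, p i a = 1) : ∑ s : ι → α, ∏ i, p i (s i) = 1 := by
  simp [← Fintype.prod_sum, hp]

end Bhattacharyya

theorem Real.exp_neg_le_one_sub_half {x : ℝ} (hx₀ : 0 ≤ x) (hx₁ : x ≤ 1) :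
    Real.exp (-x) ≤ 1 - x / 2 := by
  have h : 1 ≤ (1 - x / 2) * Real.exp x :=
    calc (1 : ℝ) ≤ (1 - x / 2) * (x + 1) := by nlinarith
      _ ≤ (1 - x / 2) * Real.exp x :=
        mul_le_mul_of_nonneg_left (Real.add_one_le_exp x) (by linarith)
  rwa [Real.exp_neg, inv_le_iff_one_le_mul₀ (Real.exp_pos x)]

theorem sq_bhattacharyya_coin_fair {ε : ℝ} (hε : |ε| ≤ 1 / 2) :
    bhattacharyya (fun b : Bool => if b then 1 / 2 - ε else 1 / 2 + ε) (fun _ => 1 / 2) ^ 2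
      = 1 / 2 + √(1 / 4 - ε ^ 2) := by
  obtain ⟨hε₁, hε₂⟩ := abs_le.mp hε
  have h₁ : 0 ≤ (1 / 2 - ε) * (1 / 2) := by nlinarith
  have h₂ : 0 ≤ (1 / 2 + ε) * (1 / 2) := by nlinarith
  have hprod : √((1 / 2 - ε) * (1 / 2)) * √((1 / 2 + ε) * (1 / 2)) = √(1 / 4 - ε ^ 2) / 2 := by
    rw [← Real.sqrt_mul h₁, show (1 / 2 - ε) * (1 / 2) * ((1 / 2 + ε) * (1 / 2))
      = (1 / 4 - ε ^ 2) / 2 ^ 2 by ring, Real.sqrt_div' _ (by positivity), Real.sqrt_sq two_pos.le]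
  simp only [bhattacharyya, Fintype.sum_bool, if_true, Bool.false_eq_true, if_false]
  rw [add_sq, Real.sq_sqrt h₁, Real.sq_sqrt h₂, mul_assoc, hprod]
  ring

theorem exp_neg_four_mul_sq_le_sq_bhattacharyya {ε : ℝ} (hε : |ε| ≤ 1 / 2) :
    Real.exp (-(4 * ε ^ 2)) ≤
      bhattacharyya (fun b : Bool => if b then 1 / 2 - ε else 1 / 2 + ε) (fun _ => 1 / 2) ^ 2 := by
  rw [sq_bhattacharyya_coin_fair hε]
  have hε2 : ε ^ 2 ≤ 1 / 4 := by nlinarith [sq_abs ε, abs_nonneg ε]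
  have hsqrt : 1 / 2 - 2 * ε ^ 2 ≤ √(1 / 4 - ε ^ 2) :=
    Real.le_sqrt_of_sq_le (by nlinarith [sq_nonneg ε])
  have hexp := Real.exp_neg_le_one_sub_half (by positivity : 0 ≤ 4 * ε ^ 2) (by linarith)
  linarith

theorem le_of_exp_neg_mul_le_mul {c K δ x : ℝ} (hc : 0 < c)
    (h : Real.exp (-(c * x)) ≤ K * δ) : 1 / c * Real.log (1 / (K * δ)) ≤ x := by
  have hKδ : 0 < K * δ := (Real.exp_pos _).trans_le h
  have hlog : -(c * x) ≤ Real.log (K * δ) := (Real.le_log_iff_exp_le hKδ).mpr h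
  rw [one_div (K * δ), Real.log_inv, one_div_mul_eq_div, div_le_iff₀ hc]
  linarith

theorem four_le_eight_mul_exp_one_mul_sqrt_pi : (4 : ℝ) ≤ 8 * Real.exp 1 * √Real.pi := by
  have he : 1 ≤ Real.exp 1 := Real.one_le_exp zero_le_one
  have hπ : 1 ≤ √Real.pi := Real.one_le_sqrt.mpr (by linarith [Real.pi_gt_three])
  nlinarith

/-- Distinguishing, with error probability at most `δ ≤ 1/16`, a coin with heads
probability `1/2 - ε` from a fair coin requires at least
`(1/(4ε²))·ln(1/(8e√π·δ))` independent samples. A (randomized) distinguisher on `ℓ`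
samples is a function `g` giving, for each sample sequence, the probability of declaring
"biased coin"; its error is at most `δ` under both product distributions. -/
theorem stmt18 (ε δ : ℝ) (hε0 : 0 < ε) (hε1 : ε < 1 / 4)
    (ℓ : ℕ) (g : (Fin ℓ → Bool) → ℝ) (hg : ∀ s, g s ∈ Set.Icc (0 : ℝ) 1)
    (hX : ∫ s, (1 - g s)
        ∂(Measure.pi fun _ : Fin ℓ =>
          (PMF.bernoulli (Real.toNNReal (1 / 2 - ε))
            (by
              apply Real.toNNReal_le_one.mpr
              linarith)).toMeasure) ≤ δ)
    (hY : ∫ s, g s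
        ∂(Measure.pi fun _ : Fin ℓ =>
          (PMF.bernoulli (1 / 2) (by norm_num)).toMeasure) ≤ δ) :
    1 / (4 * ε ^ 2) * Real.log (1 / (8 * Real.exp 1 * Real.sqrt Real.pi * δ)) ≤ ℓ := by
  have hε : |ε| ≤ 1 / 2 := abs_le.mpr ⟨by linarith, by linarith⟩
  set p : Bool → ℝ := fun b => if b then 1 / 2 - ε else 1 / 2 + ε
  set q : Bool → ℝ := fun _ => 1 / 2
  have hp b : 0 ≤ p b := by cases b <;> simp [p] <;> linarith
  have hq b : 0 ≤ q b := by norm_num [q]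
  simp only [integral_pi_toMeasure_eq_sum, PMF.toReal_bernoulli_apply,
    Real.coe_toNNReal _ (by linarith : (0 : ℝ) ≤ 1 / 2 - ε), NNReal.coe_div, NNReal.coe_one,
    NNReal.coe_ofNat, show (1 : ℝ) - (1 / 2 - ε) = 1 / 2 + ε by ring,
    show (1 : ℝ) - 1 / 2 = 1 / 2 by norm_num, ite_self] at hX hY
  have hexp : Real.exp (-(4 * ε ^ 2 * ℓ)) ≤ 4 * δ := calc
    _ = Real.exp (-(4 * ε ^ 2)) ^ ℓ := by rw [← Real.exp_nat_mul]; ring_nf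
    _ ≤ (bhattacharyya p q ^ 2) ^ ℓ := by gcongr; exact exp_neg_four_mul_sq_le_sq_bhattacharyya hε
    _ = bhattacharyya (fun s : Fin ℓ → Bool => ∏ i, p (s i)) (fun s => ∏ i, q (s i)) ^ 2 := by
      rw [bhattacharyya_pi (fun _ => hp) (fun _ => hq), Finset.prod_const, Finset.card_univ,
        Fintype.card_fin, ← pow_mul, ← pow_mul, mul_comm]
    _ ≤ 4 * δ :=
      sq_bhattacharyya_le_four_mul (fun s => Finset.prod_nonneg fun i _ => hp (s i))
        (fun s => Finset.prod_nonneg fun i _ => hq (s i))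
        (sum_prod_eq_one (p := fun _ => p) fun _ => by simp [p]; ring)
        (sum_prod_eq_one (p := fun _ => q) fun _ => by norm_num [q]) hg hX hY
  have hδ : 0 < δ := by linarith [Real.exp_pos (-(4 * ε ^ 2 * ℓ))]
  exact le_of_exp_neg_mul_le_mul (by positivity)
    (hexp.trans (mul_le_mul_of_nonneg_right four_le_eight_mul_exp_one_mul_sqrt_pi hδ.le))
end
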